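/- arXiv:1503.00510 — 3 statements merged into one kernel-verified Lean document; each statement's English description precedes it below -/
import Mathlib

section
/- Let V : M → [0,∞) be measurable on a measure space with measure μ, let x₀ be fixed and suppose f(t) = V(x₀,t)^{-1/p} where V(x₀,t) is positive and non-decreasing in t, and suppose ∫₁^∞ V(x₀,t)^{-1/p} dt < ∞. Then there exists a constant C_p > 0 such that V(x₀,t) ≥ C_p t^p for all t ≥ 2. -/
/-! If `V` is non-decreasing, then on `(t/2, t]` the integrand `V^(-1/p)` is at least `V(t)^(-1/p)`,
so `(t/2) V(t)^(-1/p)` is bounded by the finite integral `I`. Inverting, `V(t) ≥ (2I)^(-p) t^p`. -/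

open MeasureTheory Set

theorem sub_mul_le_integral_Ioi_of_antitoneOn {g : ℝ → ℝ} {a s t : ℝ}
    (hg : AntitoneOn g (Ioi a)) (hg0 : ∀ x ∈ Ioi a, 0 ≤ g x)
    (hint : IntegrableOn g (Ioi a)) (has : a ≤ s) (hst : s ≤ t) :
    (t - s) * g t ≤ ∫ x in Ioi a, g x := by
  have hsub : Ioc s t ⊆ Ioi a := fun x hx => has.trans_lt hx.1
  calc (t - s) * g t = ∫ _ in Ioc s t, g t := by
        rw [setIntegral_const, Real.volume_real_Ioc_of_le hst, smul_eq_mul]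
    _ ≤ ∫ x in Ioc s t, g x :=
        setIntegral_mono_on (integrableOn_const (by simp)) (hint.mono_set hsub)
          measurableSet_Ioc fun x hx => hg (hsub hx) ((hsub hx).trans_le hx.2) hx.2
    _ ≤ ∫ x in Ioi a, g x :=
        setIntegral_mono_set hint
          ((ae_restrict_mem measurableSet_Ioi).mono hg0) hsub.eventuallyLE

theorem rpow_le_of_rpow_neg_inv_le_div {p v c t : ℝ} (hp : 0 < p) (hv : 0 < v) (hc : 0 < c)
    (ht : 0 < t) (h : v ^ (-(1 / p)) ≤ c / t) :
    c ^ (-p) * t ^ p ≤ v := by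
  have hinv : (v ^ (-(1 / p))) ^ (-p) = v := by
    rw [← Real.rpow_mul hv.le, neg_mul_neg, one_div, inv_mul_cancel₀ hp.ne', Real.rpow_one]
  have hdiv : (c / t) ^ (-p) = c ^ (-p) * t ^ p := by
    rw [Real.div_rpow hc.le ht.le, Real.rpow_neg ht.le, div_eq_mul_inv, inv_inv]
  rw [← hinv, ← hdiv]
  exact Real.rpow_le_rpow_of_nonpos (by positivity) h (by linarith)

theorem stmt_1 (p : ℝ) (hp : 1 < p) (V : ℝ → ℝ)
    (hpos : ∀ t > (0:ℝ), 0 < V t)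
    (hmono : ∀ s t : ℝ, 0 < s → s ≤ t → V s ≤ V t)
    (hint : IntegrableOn (fun t => (V t) ^ (-(1/p))) (Ioi 1)) :
    ∃ C > (0:ℝ), ∀ t ≥ (2:ℝ), C * t ^ p ≤ V t := by
  have hp0 : 0 < p := one_pos.trans hp
  set I := ∫ t in Ioi (1:ℝ), (V t) ^ (-(1/p))
  have hanti : AntitoneOn (fun t => (V t) ^ (-(1/p))) (Ioi 1) := fun s hs t _ hst =>
    Real.rpow_le_rpow_of_nonpos (hpos s (one_pos.trans hs)) (hmono s t (one_pos.trans hs) hst)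
      (neg_nonpos.2 (by positivity))
  have hkey : ∀ t ≥ (2:ℝ), t / 2 * (V t) ^ (-(1/p)) ≤ I := fun t ht => by
    have := sub_mul_le_integral_Ioi_of_antitoneOn (s := t / 2) (t := t) hanti
      (fun x hx => (Real.rpow_pos_of_pos (hpos x (one_pos.trans hx)) _).le) hint
      (show 1 ≤ t / 2 by linarith) (by linarith)
    rwa [sub_half] at this
  have hI : 0 < I := (mul_pos one_pos (Real.rpow_pos_of_pos (hpos 2 two_pos) _)).trans_le
    (by simpa using hkey 2 le_rfl)
  refine ⟨(2 * I) ^ (-p), by positivity, fun t ht => ?_⟩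
  have ht0 : 0 < t := two_pos.trans_le ht
  refine rpow_le_of_rpow_neg_inv_le_div hp0 (hpos t ht0) (by positivity) ht0 ?_
  rw [le_div_iff₀ ht0]
  linarith [hkey t ht]
end

section
/- Let p, p₀ with 1 < p < p₀ and let V : [1,∞) → (0,∞) be non-decreasing. Suppose that for every r ∈ (1,p₀), ∫₁^∞ (t/V(t))^{1/(r-1)} dt < ∞. Then ∫₁^∞ dt/V(t)^{1/p} < ∞. -/
/-!
Pick `r` with `p < r < min p₀ (p + 1)` and put `a = 1/p`, `s = 1/(r-1)`, so `0 < a < s`.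
Pointwise, `V^(-a)` is bounded by `(t/V)^s` where `V ≤ t^(s/(s-a))` and by `t^(-1/(p-r+1))`
elsewhere; both bounds are integrable on `(1, ∞)`, the second because `p - r + 1 < 1`.
Measurability of `V^(-a) = ((t/V)^s)^(a/s) · t^(-a)` comes from that of `(t/V)^s`.
-/

open MeasureTheory Set

theorem rpow_neg_le_div_rpow_add_rpow {x v a s : ℝ} (hx : 0 < x) (hv : 0 < v) (ha : 0 < a)
    (has : a < s) : v ^ (-a) ≤ (x / v) ^ s + x ^ (-(a * s / (s - a))) := by
  have hsa : 0 < s - a := sub_pos.mpr has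
  rcases le_or_gt v (x ^ (s / (s - a))) with hle | hlt
  · have key : v ^ (-a) ≤ (x / v) ^ s := by
      rw [Real.div_rpow hx.le hv.le, le_div_iff₀ (Real.rpow_pos_of_pos hv _),
        ← Real.rpow_add hv]
      calc v ^ (-a + s) ≤ (x ^ (s / (s - a))) ^ (-a + s) := by gcongr; linarith
        _ = x ^ s := by
          rw [← Real.rpow_mul hx.le]; congr 1; field_simp; ring
    linarith [Real.rpow_nonneg hx.le (-(a * s / (s - a)))]
  · have key : v ^ (-a) ≤ x ^ (-(a * s / (s - a))) :=
      calc v ^ (-a) ≤ (x ^ (s / (s - a))) ^ (-a) :=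
            Real.rpow_le_rpow_of_nonpos (Real.rpow_pos_of_pos hx _) hlt.le (by linarith)
        _ = x ^ (-(a * s / (s - a))) := by rw [← Real.rpow_mul hx.le]; congr 1; ring
    linarith [Real.rpow_nonneg (div_pos hx hv).le s]

theorem aestronglyMeasurable_rpow_neg_of_div_rpow {V : ℝ → ℝ} {S : Set ℝ} {a s : ℝ}
    (hS : MeasurableSet S) (hs : s ≠ 0) (hpos : ∀ t ∈ S, 0 < t ∧ 0 < V t)
    (hmeas : AEStronglyMeasurable (fun t => (t / V t) ^ s) (volume.restrict S)) :
    AEStronglyMeasurable (fun t => V t ^ (-a)) (volume.restrict S) := by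
  have hcomp : AEStronglyMeasurable (fun t => ((t / V t) ^ s) ^ (a / s) * t ^ (-a))
      (volume.restrict S) := by
    exact ((hmeas.aemeasurable.pow_const (a / s)).mul (by fun_prop)).aestronglyMeasurable
  refine hcomp.congr ?_
  filter_upwards [ae_restrict_mem hS] with t ht
  obtain ⟨ht, hVt⟩ := hpos t ht
  rw [← Real.rpow_mul (div_pos ht hVt).le, mul_div_cancel₀ a hs, Real.div_rpow ht.le hVt.le,
    div_mul_eq_mul_div, ← Real.rpow_add ht, add_neg_cancel, Real.rpow_zero, one_div,
    Real.rpow_neg hVt.le]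

theorem stmt_2_general (p p₀ : ℝ) (hp : 1 < p) (hpp₀ : p < p₀) (V : ℝ → ℝ)
    (hpos : ∀ t ≥ (1:ℝ), 0 < V t)
    (hint : ∀ r : ℝ, 1 < r → r < p₀ →
      IntegrableOn (fun t => (t / V t) ^ (1/(r-1))) (Ioi 1)) :
    IntegrableOn (fun t => (V t) ^ (-(1/p))) (Ioi 1) := by
  obtain ⟨r, hpr, hr⟩ := exists_between (lt_min hpp₀ (lt_add_one p))
  have hr1 : 0 < r - 1 := by linarith
  have hrp : r - 1 < p := by linarith [min_le_right p₀ (p + 1)]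
  have hexp : 1 / p * (1 / (r - 1)) / (1 / (r - 1) - 1 / p) = 1 / (p - r + 1) := by
    field_simp; ring
  have hpos' : ∀ t ∈ Ioi (1:ℝ), 0 < t ∧ 0 < V t := fun t ht =>
    ⟨zero_lt_one.trans ht, hpos t (le_of_lt ht)⟩
  have hdom := hint r (hp.trans hpr) (hr.trans_le (min_le_left _ _))
  have hpow : IntegrableOn (fun t : ℝ => t ^ (-(1 / (p - r + 1)))) (Ioi 1) := by
    refine integrableOn_Ioi_rpow_of_lt ?_ one_pos
    rw [neg_lt_neg_iff, lt_div_iff₀ (by linarith)]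
    linarith
  refine (hdom.add hpow).mono'
    (aestronglyMeasurable_rpow_neg_of_div_rpow measurableSet_Ioi (by positivity) hpos'
      hdom.aestronglyMeasurable) ?_
  filter_upwards [ae_restrict_mem measurableSet_Ioi] with t ht
  obtain ⟨ht, hVt⟩ := hpos' t ht
  rw [Real.norm_of_nonneg (Real.rpow_nonneg hVt.le _), ← hexp]
  exact rpow_neg_le_div_rpow_add_rpow ht hVt (by positivity)
    (one_div_lt_one_div_of_lt hr1 hrp)

theorem stmt_2 (p p₀ : ℝ) (hp : 1 < p) (hpp₀ : p < p₀) (V : ℝ → ℝ)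
    (hpos : ∀ t ≥ (1:ℝ), 0 < V t)
    (hmono : ∀ s t : ℝ, 1 ≤ s → s ≤ t → V s ≤ V t)
    (hint : ∀ r : ℝ, 1 < r → r < p₀ →
      IntegrableOn (fun t => (t / V t) ^ (1/(r-1))) (Ioi 1)) :
    IntegrableOn (fun t => (V t) ^ (-(1/p))) (Ioi 1) :=
  stmt_2_general p p₀ hp hpp₀ V hpos hint
end

section
/- With the setting of the previous statement but assuming V ≤ 0 (so Tu ≤ 0 whenever u ≥ 0) and ε := sup_x (1/h(x)) ∫ G(x,y)|V(y)|h(y) dy < 1, the Neumann series g = Σ_{k≥0} (-1)^k T^k h converges pointwise and satisfies h ≤ g ≤ (1/(1-ε)) h. -/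
/-! Write `T u x = ∫ G x y * V y * u y`. Since `G > 0` and `V ≤ 0`, the operator `-T` preserves
nonnegativity, so the terms `(-1)^k T^k h` of the series are all nonnegative and the sum is at
least its zeroth term `h`. The hypothesis `∫ G x y |V y| h y ≤ ε h x` says `|T u| ≤ c ε h` whenever
`|u| ≤ c h`, so `|T^k h| ≤ ε^k h`, and comparison with the geometric series gives convergence and
the upper bound `h / (1 - ε)`. -/

open MeasureTheory Set

section KernelOperator

variable {X : Type*} [MeasurableSpace X] {μ : Measure X} {G : X → X → ℝ} {V h : X → ℝ} {ε : ℝ}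

theorem abs_integral_kernel_le (hG : ∀ x y, 0 ≤ G x y)
    (hdom : ∀ x, Integrable (fun y => G x y * |V y| * h y) μ)
    (hbound : ∀ x, ∫ y, G x y * |V y| * h y ∂μ ≤ ε * h x)
    {u : X → ℝ} {c : ℝ} (hc : 0 ≤ c) (hu : ∀ y, |u y| ≤ c * h y) (x : X) :
    |∫ y, G x y * V y * u y ∂μ| ≤ c * ε * h x := by
  have hGabs : ∀ y, |G x y| = G x y := fun y => abs_of_nonneg (hG x y)
  calc |∫ y, G x y * V y * u y ∂μ| ≤ ∫ y, G x y * |V y| * |u y| ∂μ := by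
        simpa only [Real.norm_eq_abs, abs_mul, hGabs] using
          norm_integral_le_integral_norm (μ := μ) (fun y => G x y * V y * u y)
    _ ≤ ∫ y, c * (G x y * |V y| * h y) ∂μ := by
        refine integral_mono_of_nonneg (.of_forall fun y => ?_) ((hdom x).const_mul c)
          (.of_forall fun y => ?_)
        · have := hG x y
          positivity
        · calc G x y * |V y| * |u y| ≤ G x y * |V y| * (c * h y) := by
                have := hG x y
                gcongr
                exact hu y
            _ = c * (G x y * |V y| * h y) := by ring
    _ = c * ∫ y, G x y * |V y| * h y ∂μ := integral_const_mul _ _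
    _ ≤ c * (ε * h x) := by gcongr; exact hbound x
    _ = c * ε * h x := by ring

theorem integral_kernel_nonpos (hG : ∀ x y, 0 ≤ G x y) (hV : ∀ y, V y ≤ 0) {u : X → ℝ}
    (hu : ∀ y, 0 ≤ u y) (x : X) : ∫ y, G x y * V y * u y ∂μ ≤ 0 :=
  integral_nonpos fun y =>
    mul_nonpos_of_nonpos_of_nonneg (mul_nonpos_of_nonneg_of_nonpos (hG x y) (hV y)) (hu y)

variable {hk : ℕ → X → ℝ}

theorem abs_iterate_le_pow_mul (hG : ∀ x y, 0 ≤ G x y) (hh : ∀ x, 0 ≤ h x) (hε0 : 0 ≤ ε)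
    (hdom : ∀ x, Integrable (fun y => G x y * |V y| * h y) μ)
    (hbound : ∀ x, ∫ y, G x y * |V y| * h y ∂μ ≤ ε * h x)
    (hk0 : hk 0 = h) (hrec : ∀ k x, hk (k + 1) x = ∫ y, G x y * V y * hk k y ∂μ) :
    ∀ k x, |hk k x| ≤ ε ^ k * h x
  | 0, x => by simp [hk0, abs_of_nonneg (hh x)]
  | k + 1, x => by
    rw [hrec, pow_succ]
    exact abs_integral_kernel_le hG hdom hbound (pow_nonneg hε0 k)
      (abs_iterate_le_pow_mul hG hh hε0 hdom hbound hk0 hrec k) x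

theorem neg_one_pow_mul_iterate_nonneg (hG : ∀ x y, 0 ≤ G x y) (hV : ∀ y, V y ≤ 0)
    (hh : ∀ x, 0 ≤ h x) (hk0 : hk 0 = h)
    (hrec : ∀ k x, hk (k + 1) x = ∫ y, G x y * V y * hk k y ∂μ) :
    ∀ k x, 0 ≤ (-1 : ℝ) ^ k * hk k x
  | 0, x => by simpa [hk0] using hh x
  | k + 1, x => by
    have hlin : (-1 : ℝ) ^ (k + 1) * hk (k + 1) x
        = -∫ y, G x y * V y * ((-1 : ℝ) ^ k * hk k y) ∂μ := by
      rw [hrec, pow_succ, ← integral_const_mul]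
      simp only [← integral_neg]
      congr 1 with y
      ring
    rw [hlin, neg_nonneg]
    exact integral_kernel_nonpos hG hV (neg_one_pow_mul_iterate_nonneg hG hV hh hk0 hrec k) x

end KernelOperator

section GeometricDomination

variable {a : ℕ → ℝ} {ε c : ℝ}

theorem summable_abs_of_abs_le_geometric (hε0 : 0 ≤ ε) (hε : ε < 1)
    (ha : ∀ k, |a k| ≤ ε ^ k * c) : Summable fun k => |a k| :=
  .of_nonneg_of_le (fun _ => abs_nonneg _) ha
    ((summable_geometric_of_lt_one hε0 hε).mul_right c)

theorem tsum_le_of_abs_le_geometric (hε0 : 0 ≤ ε) (hε : ε < 1)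
    (ha : ∀ k, |a k| ≤ ε ^ k * c) : ∑' k, a k ≤ (1 / (1 - ε)) * c :=
  calc ∑' k, a k ≤ ∑' k, ε ^ k * c :=
        Summable.tsum_le_tsum (fun k => (le_abs_self _).trans (ha k))
          (summable_abs_of_abs_le_geometric hε0 hε ha).of_abs
          ((summable_geometric_of_lt_one hε0 hε).mul_right c)
    _ = (1 / (1 - ε)) * c := by
        rw [tsum_mul_right, tsum_geometric_of_lt_one hε0 hε, one_div]

end GeometricDomination

theorem stmt_4_general {X : Type*} [MeasurableSpace X] (μ : Measure X)
    (G : X → X → ℝ) (V h : X → ℝ) (ε : ℝ)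
    (hG : ∀ x y, 0 < G x y) (hh : ∀ x, 0 < h x)
    (hV : ∀ y, V y ≤ 0)
    (hε0 : 0 ≤ ε) (hε : ε < 1)
    (hk : ℕ → X → ℝ) (hk0 : hk 0 = h)
    (hrec : ∀ k x, hk (k+1) x = ∫ y, G x y * V y * hk k y ∂μ)
    (hdom : ∀ x, Integrable (fun y => G x y * |V y| * h y) μ)
    (hbound : ∀ x, ∫ y, G x y * |V y| * h y ∂μ ≤ ε * h x) :
    (∀ x, Summable (fun k => |hk k x|)) ∧
    (∀ x, h x ≤ ∑' k, (-1:ℝ) ^ k * hk k x) ∧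
    (∀ x, ∑' k, (-1:ℝ) ^ k * hk k x ≤ (1/(1 - ε)) * h x) := by
  have hG' : ∀ x y, 0 ≤ G x y := fun x y => (hG x y).le
  have hh' : ∀ x, 0 ≤ h x := fun x => (hh x).le
  have hiter := abs_iterate_le_pow_mul hG' hh' hε0 hdom hbound hk0 hrec
  have hterm : ∀ x k, |(-1 : ℝ) ^ k * hk k x| ≤ ε ^ k * h x := fun x k => by
    simpa only [abs_mul, abs_pow, abs_neg, abs_one, one_pow, one_mul] using hiter k x
  refine ⟨fun x => summable_abs_of_abs_le_geometric hε0 hε (hiter · x), fun x => ?_,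
    fun x => tsum_le_of_abs_le_geometric hε0 hε (hterm x)⟩
  simpa [hk0] using (summable_abs_of_abs_le_geometric hε0 hε (hterm x)).of_abs.le_tsum 0
    fun k _ => neg_one_pow_mul_iterate_nonneg hG' hV hh' hk0 hrec k x

theorem stmt_4 {X : Type*} [MeasurableSpace X] (μ : Measure X) [SigmaFinite μ]
    (G : X → X → ℝ) (V h : X → ℝ) (ε : ℝ)
    (hG : ∀ x y, 0 < G x y) (hh : ∀ x, 0 < h x)
    (hV : ∀ y, V y ≤ 0)
    (hε0 : 0 ≤ ε) (hε : ε < 1)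
    (hk : ℕ → X → ℝ) (hk0 : hk 0 = h)
    (hrec : ∀ k x, hk (k+1) x = ∫ y, G x y * V y * hk k y ∂μ)
    (hdom : ∀ x, Integrable (fun y => G x y * |V y| * h y) μ)
    (hmeas : ∀ k x, AEStronglyMeasurable (fun y => G x y * V y * hk k y) μ)
    (hbound : ∀ x, ∫ y, G x y * |V y| * h y ∂μ ≤ ε * h x) :
    (∀ x, Summable (fun k => |hk k x|)) ∧
    (∀ x, h x ≤ ∑' k, (-1:ℝ) ^ k * hk k x) ∧
    (∀ x, ∑' k, (-1:ℝ) ^ k * hk k x ≤ (1/(1 - ε)) * h x) :=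
  stmt_4_general μ G V h ε hG hh hV hε0 hε hk hk0 hrec hdom hbound
end
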